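/- arXiv:1511.05872 — 2 statements merged into one kernel-verified Lean document; each statement's English description precedes it below -/
import Mathlib

section
/- If λ ∈ ℂ satisfies λ² + μλ + 1 = 0 for some μ ∈ ℂ with μ ≠ -2 and μ ≠ 2, then j(λ) = 256(λ² - λ + 1)³ / (λ² - λ)² = 256(μ+1)³/(μ+2). -/
/-!
From `λ² = -μλ - 1` one gets `λ² - λ + 1 = -(μ + 1)λ` and `(λ² - λ)² = λ²(λ - 1)² = -(μ + 2)λ³`,
so both numerator and denominator of `j(λ)` are multiples of `λ³`, which cancels.
-/

section LegendreJ

variable {K : Type*} [Field K] {lam mu : K}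

theorem ne_zero_of_sq_add_mul_add_one (h : lam ^ 2 + mu * lam + 1 = 0) : lam ≠ 0 := by
  rintro rfl
  simp at h

theorem sq_sub_self_add_one_eq (h : lam ^ 2 + mu * lam + 1 = 0) :
    lam ^ 2 - lam + 1 = -(mu + 1) * lam := by
  linear_combination h

theorem sq_sub_self_sq_eq (h : lam ^ 2 + mu * lam + 1 = 0) :
    (lam ^ 2 - lam) ^ 2 = -(mu + 2) * lam ^ 3 := by
  linear_combination lam ^ 2 * h

theorem legendre_j_eq (h : lam ^ 2 + mu * lam + 1 = 0) :
    256 * (lam ^ 2 - lam + 1) ^ 3 / (lam ^ 2 - lam) ^ 2 = 256 * (mu + 1) ^ 3 / (mu + 2) := by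
  have hlam : lam ^ 3 ≠ 0 := pow_ne_zero 3 (ne_zero_of_sq_add_mul_add_one h)
  rw [sq_sub_self_add_one_eq h, sq_sub_self_sq_eq h]
  calc 256 * (-(mu + 1) * lam) ^ 3 / (-(mu + 2) * lam ^ 3)
      = -(256 * (mu + 1) ^ 3 * lam ^ 3) / -((mu + 2) * lam ^ 3) := by ring
    _ = 256 * (mu + 1) ^ 3 * lam ^ 3 / ((mu + 2) * lam ^ 3) := neg_div_neg_eq _ _
    _ = 256 * (mu + 1) ^ 3 / (mu + 2) := mul_div_mul_right _ _ hlam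

end LegendreJ

theorem stmt_7_general (lam mu : ℂ)
    (h : lam^2 + mu * lam + 1 = 0) :
    256 * (lam^2 - lam + 1)^3 / (lam^2 - lam)^2 = 256 * (mu + 1)^3 / (mu + 2) :=
  legendre_j_eq h

theorem stmt_7 (lam mu : ℂ) (hmu2 : mu ≠ -2) (hmu2' : mu ≠ 2)
    (h : lam^2 + mu * lam + 1 = 0) :
    256 * (lam^2 - lam + 1)^3 / (lam^2 - lam)^2 = 256 * (mu + 1)^3 / (mu + 2) :=
  stmt_7_general lam mu h
end

section
/- The polynomial identity (-1/4)(x-1)(x-β²)(x+β)² - β²x(x-β)² = (-1/4)(x² - (8β+2)x + β²)² holds in ℂ[x] whenever β² + 6β + 1 = 0. -/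
theorem stmt_13 (β : ℂ) (hβ : β^2 + 6*β + 1 = 0) :
    ∀ x : ℂ, (-1/4 : ℂ) * (x - 1) * (x - β^2) * (x + β)^2 - β^2 * x * (x - β)^2 =
      (-1/4 : ℂ) * (x^2 - (8*β + 2)*x + β^2)^2 := by
  intro x
  linear_combination (-x / 4 * (3 * x^2 - (10 * β + 4) * x + 3 * β^2)) * hβ
end
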